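/- arXiv:2502.14237 — 3 statements merged into one kernel-verified Lean document; each statement's English description precedes it below -/
import Mathlib

section
/- For a > 0, b ≥ 2, and p a homogeneous harmonic polynomial of degree b on ℝⁿ, Δ((1+|x|²)^{−a} p(x)) = −2a(2a+2)(1+|x|²)^{−a−2} p(x) − 2a(n−2a+2b−2)(1+|x|²)^{−a−1} p(x). -/
/-- The partial derivative `∂ᵢ f` on `ℝⁿ = EuclideanSpace ℝ (Fin n)`. -/
noncomputable def pd (n : ℕ) (i : Fin n) (f : EuclideanSpace ℝ (Fin n) → ℝ)
    (x : EuclideanSpace ℝ (Fin n)) : ℝ :=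
  fderiv ℝ f x (EuclideanSpace.single i 1)

/-- The Euclidean Laplacian `Δf = ∑ᵢ ∂ᵢ∂ᵢ f` on `ℝⁿ`. -/
noncomputable def lap (n : ℕ) (f : EuclideanSpace ℝ (Fin n) → ℝ)
    (x : EuclideanSpace ℝ (Fin n)) : ℝ :=
  ∑ i, pd n i (pd n i f) x

/-! By the product rule, `Δ(f p) = f Δp + 2 ∇f · ∇p + p Δf` with `f = (1 + |x|²)^(-a)`.
Here `Δp = 0`, and `∇f = -2a (1 + |x|²)^(-a-1) x`, so Euler's identity `x · ∇p = b p` turns the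
cross term into `-4ab (1 + |x|²)^(-a-1) p`. A direct computation gives
`Δf = 4a(a+1) (1 + |x|²)^(-a-2) |x|² - 2an (1 + |x|²)^(-a-1)`, and writing `|x|² = (1 + |x|²) - 1`
collects everything into the two stated powers. -/
section
variable {n : ℕ} {f g : EuclideanSpace ℝ (Fin n) → ℝ} {x : EuclideanSpace ℝ (Fin n)}

lemma HasFDerivAt.pd_eq {f' : EuclideanSpace ℝ (Fin n) →L[ℝ] ℝ} (hf : HasFDerivAt f f' x)
    (i : Fin n) : pd n i f x = f' (EuclideanSpace.single i 1) := by
  rw [pd, hf.fderiv]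

lemma pd_add (hf : DifferentiableAt ℝ f x) (hg : DifferentiableAt ℝ g x) (i : Fin n) :
    pd n i (fun y => f y + g y) x = pd n i f x + pd n i g x := by
  simp [pd, fderiv_fun_add hf hg]

lemma pd_mul (hf : DifferentiableAt ℝ f x) (hg : DifferentiableAt ℝ g x) (i : Fin n) :
    pd n i (fun y => f y * g y) x = f x * pd n i g x + g x * pd n i f x := by
  simp [pd, fderiv_fun_mul hf hg]

lemma pd_const_mul (hf : DifferentiableAt ℝ f x) (a : ℝ) (i : Fin n) :
    pd n i (fun y => a * f y) x = a * pd n i f x := by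
  simp [pd, fderiv_const_mul hf]

lemma pd_coord (i : Fin n) : pd n i (fun y => y i) x = 1 := by
  simpa using ((EuclideanSpace.proj i).hasFDerivAt (x := x)).pd_eq i

lemma ContDiff.pd {k : WithTop ℕ∞} (hf : ContDiff ℝ (k + 1) f) (i : Fin n) :
    ContDiff ℝ k (pd n i f) :=
  (hf.fderiv_right le_rfl).clm_apply contDiff_const

lemma fderiv_apply_eq_sum_pd (v : EuclideanSpace ℝ (Fin n)) :
    fderiv ℝ f x v = ∑ i, v i * pd n i f x := by
  conv_lhs => rw [← (EuclideanSpace.basisFun (Fin n) ℝ).sum_repr v]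
  simp [pd]

lemma lap_mul (hf : ContDiff ℝ 2 f) (hg : ContDiff ℝ 2 g) (x : EuclideanSpace ℝ (Fin n)) :
    lap n (fun y => f y * g y) x =
      f x * lap n g x + 2 * ∑ i, pd n i f x * pd n i g x + g x * lap n f x := by
  have hf1 : Differentiable ℝ f := hf.differentiable two_ne_zero
  have hg1 : Differentiable ℝ g := hg.differentiable two_ne_zero
  have hf2 i : Differentiable ℝ (pd n i f) := (hf.pd (k := 1) i).differentiable one_ne_zero
  have hg2 i : Differentiable ℝ (pd n i g) := (hg.pd (k := 1) i).differentiable one_ne_zero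
  have hpd i : pd n i (fun y => f y * g y) = fun y => f y * pd n i g y + g y * pd n i f y :=
    funext fun y => pd_mul (hf1 y) (hg1 y) i
  simp only [lap, hpd, Finset.mul_sum, ← Finset.sum_add_distrib]
  refine Finset.sum_congr rfl fun i _ => ?_
  rw [pd_add ((hf1 x).fun_mul (hg2 i x)) ((hg1 x).fun_mul (hf2 i x)), pd_mul (hf1 x) (hg2 i x),
    pd_mul (hg1 x) (hf2 i x)]
  ring
end

section
variable {n : ℕ}

lemma contDiff_one_add_norm_sq_rpow (c : ℝ) {k : WithTop ℕ∞} :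
    ContDiff ℝ k fun y : EuclideanSpace ℝ (Fin n) => (1 + ‖y‖ ^ 2) ^ c :=
  (contDiff_const.add (contDiff_norm_sq ℝ)).rpow_const_of_ne fun _ => by positivity

lemma pd_one_add_norm_sq_rpow (c : ℝ) (i : Fin n) (x : EuclideanSpace ℝ (Fin n)) :
    pd n i (fun y => (1 + ‖y‖ ^ 2) ^ c) x = 2 * c * ((1 + ‖x‖ ^ 2) ^ (c - 1) * x i) := by
  have h := (((hasStrictFDerivAt_norm_sq x).hasFDerivAt.const_add 1).rpow_const
    (p := c) (Or.inl (by positivity)))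
  rw [h.pd_eq i]
  simp only [smul_apply, coe_innerSL_apply,
    EuclideanSpace.inner_single_right, Real.ringHom_apply, one_mul, nsmul_eq_mul, Nat.cast_ofNat,
    smul_eq_mul]
  ring

lemma lap_one_add_norm_sq_rpow (c : ℝ) (x : EuclideanSpace ℝ (Fin n)) :
    lap n (fun y => (1 + ‖y‖ ^ 2) ^ c) x =
      4 * c * (c - 1) * (1 + ‖x‖ ^ 2) ^ (c - 2) * ‖x‖ ^ 2
        + 2 * c * n * (1 + ‖x‖ ^ 2) ^ (c - 1) := by
  have hq : Differentiable ℝ fun y : EuclideanSpace ℝ (Fin n) => (1 + ‖y‖ ^ 2) ^ (c - 1) :=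
    (contDiff_one_add_norm_sq_rpow (c - 1) (k := 1)).differentiable one_ne_zero
  have hcoord i : Differentiable ℝ fun y : EuclideanSpace ℝ (Fin n) => y i :=
    (EuclideanSpace.proj (𝕜 := ℝ) i).differentiable
  have hpd i (y : EuclideanSpace ℝ (Fin n)) :
      pd n i (pd n i fun y => (1 + ‖y‖ ^ 2) ^ c) y =
        2 * c * ((1 + ‖y‖ ^ 2) ^ (c - 1) + 2 * (c - 1) * (1 + ‖y‖ ^ 2) ^ (c - 2) * y i ^ 2) := by
    simp only [funext (pd_one_add_norm_sq_rpow c i)]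
    rw [pd_const_mul ((hq y).fun_mul (hcoord i y)), pd_mul (hq y) (hcoord i y), pd_coord,
      pd_one_add_norm_sq_rpow, sub_sub, one_add_one_eq_two]
    ring
  simp only [lap, hpd, ← Finset.mul_sum, Finset.sum_add_distrib, Finset.sum_const,
    Finset.card_univ, Fintype.card_fin, nsmul_eq_mul, ← EuclideanSpace.real_norm_sq_eq]
  ring
end

lemma fderiv_apply_self_of_homogeneous {E F : Type*} [NormedAddCommGroup E] [NormedSpace ℝ E]
    [NormedAddCommGroup F] [NormedSpace ℝ F] {p : E → F} {x : E} {b : ℕ}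
    (hp : DifferentiableAt ℝ p x) (hhom : ∀ t : ℝ, p (t • x) = t ^ b • p x) :
    fderiv ℝ p x x = (b : ℝ) • p x := by
  have hline : HasDerivAt (fun t : ℝ => p (t • x)) (fderiv ℝ p x x) 1 := by
    have hsmul : HasDerivAt (fun t : ℝ => t • x) x 1 := by
      simpa using (hasDerivAt_id (1 : ℝ)).smul_const x
    have hp' : HasFDerivAt p (fderiv ℝ p x) ((1 : ℝ) • x) := by simpa using hp.hasFDerivAt
    exact hp'.comp_hasDerivAt 1 hsmul
  have hpow : HasDerivAt (fun t : ℝ => t ^ b • p x) ((b : ℝ) • p x) 1 := by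
    simpa using (hasDerivAt_pow b (1 : ℝ)).smul_const (p x)
  exact hline.unique (by simpa only [hhom] using hpow)

theorem lap_inv_pow_mul_harmonic_general (n b : ℕ) (a : ℝ)
    (p : EuclideanSpace ℝ (Fin n) → ℝ)
    (hsmooth : ContDiff ℝ (⊤ : ℕ∞) p)
    (hhom : ∀ (t : ℝ) (x : EuclideanSpace ℝ (Fin n)), p (t • x) = t ^ b * p x)
    (hharm : ∀ x, lap n p x = 0)
    (x : EuclideanSpace ℝ (Fin n)) :
    lap n (fun y => (1 + ‖y‖ ^ 2) ^ (-a) * p y) x =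
      -2 * a * (2 * a + 2) * (1 + ‖x‖ ^ 2) ^ (-a - 2) * p x
      - 2 * a * ((n : ℝ) - 2 * a + 2 * (b : ℝ) - 2) * (1 + ‖x‖ ^ 2) ^ (-a - 1) * p x := by
  have hp : ContDiff ℝ 2 p := hsmooth.of_le (WithTop.coe_le_coe.mpr le_top)
  have heuler : ∑ i, x i * pd n i p x = b * p x := by
    rw [← fderiv_apply_eq_sum_pd,
      fderiv_apply_self_of_homogeneous (hp.differentiable two_ne_zero x) (fun t => hhom t x),
      smul_eq_mul]
  have hcross : ∑ i, pd n i (fun y => (1 + ‖y‖ ^ 2) ^ (-a)) x * pd n i p x =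
      -2 * a * b * (1 + ‖x‖ ^ 2) ^ (-a - 1) * p x := by
    simp only [pd_one_add_norm_sq_rpow, mul_assoc, ← Finset.mul_sum, heuler]
    ring
  have hsplit : (1 + ‖x‖ ^ 2) ^ (-a - 1) = (1 + ‖x‖ ^ 2) ^ (-a - 2) * (1 + ‖x‖ ^ 2) := by
    rw [← Real.rpow_add_one (by positivity)]
    ring_nf
  rw [lap_mul (contDiff_one_add_norm_sq_rpow (-a)) hp, hharm, hcross, lap_one_add_norm_sq_rpow]
  linear_combination (-4 * a * (a + 1) * p x) * hsplit

/-- For `a > 0`, `b ≥ 2`, and `p` a homogeneous harmonic polynomial of degree `b` on `ℝⁿ`,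
`Δ((1+|x|²)^{−a} p(x)) = −2a(2a+2)(1+|x|²)^{−a−2} p(x) − 2a(n−2a+2b−2)(1+|x|²)^{−a−1} p(x)`. -/
theorem lap_inv_pow_mul_harmonic (n b : ℕ) (hn : 1 ≤ n) (a : ℝ) (ha : 0 < a) (hb : 2 ≤ b)
    (p : EuclideanSpace ℝ (Fin n) → ℝ)
    (hsmooth : ContDiff ℝ (⊤ : ℕ∞) p)
    (hhom : ∀ (t : ℝ) (x : EuclideanSpace ℝ (Fin n)), p (t • x) = t ^ b * p x)
    (hharm : ∀ x, lap n p x = 0)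
    (x : EuclideanSpace ℝ (Fin n)) :
    lap n (fun y => (1 + ‖y‖ ^ 2) ^ (-a) * p y) x =
      -2 * a * (2 * a + 2) * (1 + ‖x‖ ^ 2) ^ (-a - 2) * p x
      - 2 * a * ((n : ℝ) - 2 * a + 2 * (b : ℝ) - 2) * (1 + ‖x‖ ^ 2) ^ (-a - 1) * p x :=
  lap_inv_pow_mul_harmonic_general n b a p hsmooth hhom hharm x
end

section
/- For n > 6, the function w(x) = (1+|x|²)^{−(n−6)/2} on ℝⁿ satisfies Δ(Δ(Δw)) = −(n−6)(n−4)(n−2)n(n+2)(n+4)·w^{(n+6)/(n−6)}. -/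
/-- Powers of `1 + ‖x‖²`. -/
noncomputable def gg (n : ℕ) (q : ℝ) (x : EuclideanSpace ℝ (Fin n)) : ℝ :=
  (1 + ‖x‖ ^ 2) ^ q

lemma gg_hasFDerivAt (n : ℕ) (q : ℝ) (x : EuclideanSpace ℝ (Fin n)) :
    HasFDerivAt (gg n q)
      ((q * (1 + ‖x‖ ^ 2) ^ (q - 1)) • (2 • (innerSL ℝ x))) x := by
  have hs : HasFDerivAt (fun y : EuclideanSpace ℝ (Fin n) => 1 + ‖y‖ ^ 2)
      (2 • (innerSL ℝ x)) x :=
    ((hasStrictFDerivAt_norm_sq x).hasFDerivAt).const_add 1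
  have hne : (1 : ℝ) + ‖x‖ ^ 2 ≠ 0 := by positivity
  exact hs.rpow_const (Or.inl hne)

lemma gg_differentiable (n : ℕ) (q : ℝ) : Differentiable ℝ (gg n q) :=
  fun x => (gg_hasFDerivAt n q x).differentiableAt

lemma pd_gg (n : ℕ) (q : ℝ) (i : Fin n) (x : EuclideanSpace ℝ (Fin n)) :
    pd n i (gg n q) x = 2 * q * gg n (q - 1) x * x i := by
  unfold pd
  rw [(gg_hasFDerivAt n q x).fderiv]
  have h1 : (innerSL ℝ x) (EuclideanSpace.single i (1:ℝ)) = x i := by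
    simp [EuclideanSpace.inner_single_right]
  simp [gg, h1]
  ring

lemma hh_hasFDerivAt (n : ℕ) (q : ℝ) (i : Fin n) (x : EuclideanSpace ℝ (Fin n)) :
    HasFDerivAt (fun y : EuclideanSpace ℝ (Fin n) => gg n q y * y i)
      (gg n q x • (EuclideanSpace.proj i : EuclideanSpace ℝ (Fin n) →L[ℝ] ℝ)
        + x i • ((q * (1 + ‖x‖ ^ 2) ^ (q - 1)) • (2 • (innerSL ℝ x)))) x := by
  have hp : HasFDerivAt (fun y : EuclideanSpace ℝ (Fin n) => y i)
      (EuclideanSpace.proj i : EuclideanSpace ℝ (Fin n) →L[ℝ] ℝ) x :=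
    (EuclideanSpace.proj i : EuclideanSpace ℝ (Fin n) →L[ℝ] ℝ).hasFDerivAt
  exact (gg_hasFDerivAt n q x).mul hp

lemma hh_differentiable (n : ℕ) (q : ℝ) (i : Fin n) :
    Differentiable ℝ (fun y : EuclideanSpace ℝ (Fin n) => gg n q y * y i) :=
  fun x => (hh_hasFDerivAt n q i x).differentiableAt

lemma pd_hh (n : ℕ) (q : ℝ) (i : Fin n) (x : EuclideanSpace ℝ (Fin n)) :
    pd n i (fun y => gg n q y * y i) x
      = gg n q x + 2 * q * gg n (q - 1) x * x i * x i := by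
  unfold pd
  rw [(hh_hasFDerivAt n q i x).fderiv]
  have h1 : (innerSL ℝ x) (EuclideanSpace.single i (1:ℝ)) = x i := by
    simp [EuclideanSpace.inner_single_right]
  simp [gg, h1]
  ring

lemma pd_gg_eq (n : ℕ) (q : ℝ) (i : Fin n) :
    pd n i (gg n q) = fun y => 2 * q * (gg n (q - 1) y * y i) := by
  funext y
  rw [pd_gg]
  ring
lemma pd_gg_differentiable (n : ℕ) (q : ℝ) (i : Fin n) :
    Differentiable ℝ (pd n i (gg n q)) := by
  rw [pd_gg_eq]
  exact (hh_differentiable n (q - 1) i).const_mul _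

lemma pdpd_gg (n : ℕ) (q : ℝ) (i : Fin n) (x : EuclideanSpace ℝ (Fin n)) :
    pd n i (pd n i (gg n q)) x
      = 2 * q * gg n (q - 1) x + (4 * q * (q - 1) * gg n (q - 2) x) * (x i * x i) := by
  rw [pd_gg_eq]
  unfold pd
  rw [fderiv_const_mul ((hh_differentiable n (q - 1) i) x)]
  have h2 : fderiv ℝ (fun y : EuclideanSpace ℝ (Fin n) => gg n (q-1) y * y i) x
      (EuclideanSpace.single i 1)
      = gg n (q-1) x + 2 * (q-1) * gg n (q-1-1) x * x i * x i := pd_hh n (q-1) i x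
  simp only [ContinuousLinearMap.smul_apply, smul_eq_mul, h2]
  have h3 : q - 1 - 1 = q - 2 := by ring
  rw [h3]; ring

lemma sum_sq (n : ℕ) (x : EuclideanSpace ℝ (Fin n)) :
    ∑ i, x i * x i = ‖x‖ ^ 2 := by
  rw [EuclideanSpace.norm_eq x, Real.sq_sqrt (by positivity)]
  refine Finset.sum_congr rfl fun i _ => ?_
  rw [Real.norm_eq_abs, sq_abs, sq]

lemma gg_step (n : ℕ) (q : ℝ) (x : EuclideanSpace ℝ (Fin n)) :
    gg n (q - 2) x * ‖x‖ ^ 2 = gg n (q - 1) x - gg n (q - 2) x := by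
  have hne : (1 : ℝ) + ‖x‖ ^ 2 ≠ 0 := by positivity
  have h1 : gg n (q - 1) x = gg n (q - 2) x * (1 + ‖x‖ ^ 2) := by
    unfold gg
    rw [show q - 1 = (q - 2) + 1 by ring, Real.rpow_add_one hne]
  rw [h1]; ring

lemma lap_gg (n : ℕ) (q : ℝ) (x : EuclideanSpace ℝ (Fin n)) :
    lap n (gg n q) x
      = (2 * q * ((n : ℝ) + 2 * q - 2)) * gg n (q - 1) x
        + (-(4 * q * (q - 1))) * gg n (q - 2) x := by
  unfold lap
  rw [Finset.sum_congr rfl fun i _ => pdpd_gg n q i x]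
  rw [Finset.sum_add_distrib, Finset.sum_const, ← Finset.mul_sum, sum_sq,
    Finset.card_univ, Fintype.card_fin, nsmul_eq_mul]
  linear_combination (4 * q * (q - 1)) * gg_step n q x
lemma pd_comb3 (n : ℕ) (i : Fin n) (a b c : ℝ)
    (f1 f2 f3 : EuclideanSpace ℝ (Fin n) → ℝ) (y : EuclideanSpace ℝ (Fin n))
    (h1 : DifferentiableAt ℝ f1 y) (h2 : DifferentiableAt ℝ f2 y)
    (h3 : DifferentiableAt ℝ f3 y) :
    pd n i (fun z => a * f1 z + b * f2 z + c * f3 z) y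
      = a * pd n i f1 y + b * pd n i f2 y + c * pd n i f3 y := by
  unfold pd
  rw [fderiv_fun_add (f := fun z => a * f1 z + b * f2 z) (g := fun z => c * f3 z)
      ((h1.const_mul a).add (h2.const_mul b)) (h3.const_mul c),
    fderiv_fun_add (h1.const_mul a) (h2.const_mul b),
    fderiv_const_mul h1, fderiv_const_mul h2, fderiv_const_mul h3]
  simp

lemma lap_comb3 (n : ℕ) (a b c q1 q2 q3 : ℝ) (x : EuclideanSpace ℝ (Fin n)) :
    lap n (fun z => a * gg n q1 z + b * gg n q2 z + c * gg n q3 z) x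
      = a * lap n (gg n q1) x + b * lap n (gg n q2) x + c * lap n (gg n q3) x := by
  unfold lap
  rw [Finset.mul_sum, Finset.mul_sum, Finset.mul_sum, ← Finset.sum_add_distrib,
    ← Finset.sum_add_distrib]
  refine Finset.sum_congr rfl fun i _ => ?_
  have e1 : pd n i (fun z => a * gg n q1 z + b * gg n q2 z + c * gg n q3 z)
      = fun y => a * pd n i (gg n q1) y + b * pd n i (gg n q2) y + c * pd n i (gg n q3) y := by
    funext y
    exact pd_comb3 n i a b c _ _ _ y (gg_differentiable n q1 y)
      (gg_differentiable n q2 y) (gg_differentiable n q3 y)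
  rw [e1]
  exact pd_comb3 n i a b c _ _ _ x (pd_gg_differentiable n q1 i x)
    (pd_gg_differentiable n q2 i x) (pd_gg_differentiable n q3 i x)

/-- For `n > 6`, the standard bubble `w(x) = (1+|x|²)^{−(n−6)/2}` on `ℝⁿ` satisfies
`Δ(Δ(Δw)) = −(n−6)(n−4)(n−2)n(n+2)(n+4)·w^{(n+6)/(n−6)}`. -/
theorem trilap_bubble (n : ℕ) (hn : 6 < n)
    (w : EuclideanSpace ℝ (Fin n) → ℝ)
    (hw : ∀ x, w x = (1 + ‖x‖ ^ 2) ^ (-(((n : ℝ) - 6) / 2)))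
    (x : EuclideanSpace ℝ (Fin n)) :
    lap n (lap n (lap n w)) x =
      -(((n : ℝ) - 6) * ((n : ℝ) - 4) * ((n : ℝ) - 2) * (n : ℝ) * ((n : ℝ) + 2) * ((n : ℝ) + 4))
        * w x ^ (((n : ℝ) + 6) / ((n : ℝ) - 6)) := by
  have hn6 : ((n : ℝ)) - 6 ≠ 0 := by
    have : (6 : ℝ) < n := by exact_mod_cast hn
    linarith
  set p : ℝ := ((6 : ℝ) - n) / 2 with hp
  have hwg : w = gg n p := by
    funext y
    rw [hw y]
    unfold gg
    congr 1
    rw [hp]; ring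
  -- level 1
  have L1 : lap n w = fun y =>
      (2 * p * ((n : ℝ) + 2 * p - 2)) * gg n (p - 1) y
        + (-(4 * p * (p - 1))) * gg n (p - 2) y + 0 * gg n (p - 3) y := by
    funext y
    rw [hwg, lap_gg]
    ring
  -- level 2
  have L2 : lap n (lap n w) = fun y =>
      ((2 * p * ((n : ℝ) + 2 * p - 2)) * (2 * (p-1) * ((n : ℝ) + 2 * (p-1) - 2)))
          * gg n (p - 2) y
        + ((2 * p * ((n : ℝ) + 2 * p - 2)) * (-(4 * (p-1) * ((p-1) - 1)))
            + (-(4 * p * (p - 1))) * (2 * (p-2) * ((n : ℝ) + 2 * (p-2) - 2)))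
          * gg n (p - 3) y
        + ((-(4 * p * (p - 1))) * (-(4 * (p-2) * ((p-2) - 1)))) * gg n (p - 4) y := by
    funext y
    rw [L1, lap_comb3, lap_gg, lap_gg, lap_gg,
      show p - 1 - 1 = p - 2 by ring, show p - 1 - 2 = p - 3 by ring,
      show p - 2 - 1 = p - 3 by ring, show p - 2 - 2 = p - 4 by ring,
      show p - 3 - 1 = p - 4 by ring, show p - 3 - 2 = p - 5 by ring]
    ring
  rw [L2, lap_comb3, lap_gg, lap_gg, lap_gg,
    show p - 2 - 1 = p - 3 by ring, show p - 2 - 2 = p - 4 by ring,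
    show p - 3 - 1 = p - 4 by ring, show p - 3 - 2 = p - 5 by ring,
    show p - 4 - 1 = p - 5 by ring, show p - 4 - 2 = p - 6 by ring]
  -- rewrite the right-hand side as a power of `1 + ‖x‖²`
  rw [hw x]
  have hpos : (0 : ℝ) < 1 + ‖x‖ ^ 2 := by positivity
  have hr : (((1 : ℝ) + ‖x‖ ^ 2) ^ (-(((n : ℝ) - 6) / 2))) ^ (((n : ℝ) + 6) / ((n : ℝ) - 6))
      = gg n (p - 6) x := by
    unfold gg
    rw [← Real.rpow_mul (le_of_lt hpos)]
    congr 1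
    rw [hp]
    field_simp
    ring
  rw [hr, hp]
  ring
end

section
/- Let V = (V₁,…,Vₙ) be a vector field on ℝⁿ whose components are homogeneous harmonic polynomials of degree s+1, with div V = 0 and xᵢVᵢ = 0. Define Ŵᵢⱼ = |x|^{2q}(∂ᵢVⱼ + ∂ⱼVᵢ) − s|x|^{2q−2}(xⱼVᵢ + xᵢVⱼ) for q ≥ 1. Then the double divergence vanishes: Ŵᵢⱼ,ᵢⱼ = 0. -/
/-!
Write `r² = ‖x‖²`, `Aᵢⱼ = ∂ᵢVⱼ + ∂ⱼVᵢ` and `Bᵢⱼ = xⱼVᵢ + xᵢVⱼ`, so that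
`Ŵ = (r²)^q A − s (r²)^(q-1) B`. For a symmetric matrix field `ψ` the Leibniz rule gives
`((r²)^m ψᵢⱼ),ᵢⱼ = ((r²)^m),ᵢⱼ ψᵢⱼ + 2 ((r²)^m),ᵢ ψᵢⱼ,ⱼ + (r²)^m ψᵢⱼ,ᵢⱼ`; the gradient of `(r²)^m`
is a multiple of `x` and its Hessian a combination of `δᵢⱼ` and `xᵢxⱼ`, so the double divergence
vanishes as soon as `ψᵢᵢ`, `xᵢxⱼψᵢⱼ`, `xⱼψᵢⱼ,ᵢ` and `ψᵢⱼ,ᵢⱼ` do. Both tensors qualify: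
`Aᵢᵢ = 2 div V`, `xᵢxⱼAᵢⱼ = 2(s+1) x·V` by Euler's identity and `Aᵢⱼ,ᵢ = ΔVⱼ + (div V),ⱼ = 0`;
`Bᵢᵢ = 2 x·V`, `xᵢxⱼBᵢⱼ = 2r² x·V` and `Bᵢⱼ,ᵢ = (n+s+2)Vⱼ`.
-/

open Finset

namespace DoubleDivergence

variable {n : ℕ}

local notation "ℝ^" m:max => EuclideanSpace ℝ (Fin m)

section PartialDerivatives

variable {f g : ℝ^n → ℝ} {x : ℝ^n}

lemma pd_add (hf : DifferentiableAt ℝ f x) (hg : DifferentiableAt ℝ g x) (i : Fin n) :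
    pd n i (fun y => f y + g y) x = pd n i f x + pd n i g x := by
  simp [pd, fderiv_fun_add hf hg]

lemma pd_sub (hf : DifferentiableAt ℝ f x) (hg : DifferentiableAt ℝ g x) (i : Fin n) :
    pd n i (fun y => f y - g y) x = pd n i f x - pd n i g x := by
  simp [pd, fderiv_fun_sub hf hg]

lemma pd_const_mul (hf : DifferentiableAt ℝ f x) (c : ℝ) (i : Fin n) :
    pd n i (fun y => c * f y) x = c * pd n i f x := by
  simp [pd, fderiv_const_mul hf c]

lemma pd_mul (hf : DifferentiableAt ℝ f x) (hg : DifferentiableAt ℝ g x) (i : Fin n) :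
    pd n i (fun y => f y * g y) x = pd n i f x * g x + f x * pd n i g x := by
  simp [pd, fderiv_fun_mul hf hg]
  ring

lemma pd_pow (hf : DifferentiableAt ℝ f x) (m : ℕ) (i : Fin n) :
    pd n i (fun y => f y ^ m) x = m * f x ^ (m - 1) * pd n i f x := by
  simp [pd, fderiv_fun_pow m hf]

lemma pd_sum {ι : Type*} {u : Finset ι} {F : ι → ℝ^n → ℝ}
    (h : ∀ k ∈ u, DifferentiableAt ℝ (F k) x) (i : Fin n) :
    pd n i (fun y => ∑ k ∈ u, F k y) x = ∑ k ∈ u, pd n i (F k) x := by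
  simp [pd, fderiv_fun_sum h]

lemma pd_coord (k i : Fin n) (x : ℝ^n) :
    pd n i (fun y : ℝ^n => y k) x = if k = i then 1 else 0 := by
  change fderiv ℝ (EuclideanSpace.proj (𝕜 := ℝ) k) x _ = _
  rw [ContinuousLinearMap.fderiv]
  simp [PiLp.single_apply]

lemma contDiff_coord {k : WithTop ℕ∞} (i : Fin n) : ContDiff ℝ k (fun y : ℝ^n => y i) :=
  (EuclideanSpace.proj (𝕜 := ℝ) i).contDiff

lemma pd_norm_sq (i : Fin n) (x : ℝ^n) : pd n i (fun y : ℝ^n => ‖y‖ ^ 2) x = 2 * x i := by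
  simp [pd, fderiv_norm_sq_apply, EuclideanSpace.inner_single_right]

lemma contDiff_pd {k : WithTop ℕ∞} (hf : ContDiff ℝ (k + 1) f) (i : Fin n) :
    ContDiff ℝ k (pd n i f) :=
  (hf.fderiv_right le_rfl).clm_apply contDiff_const

lemma differentiable_pd (hf : ContDiff ℝ 2 f) (i : Fin n) : Differentiable ℝ (pd n i f) :=
  (contDiff_pd (k := 1) hf i).differentiable one_ne_zero

lemma pd_pd_eq_fderiv_fderiv (hf : ContDiff ℝ 2 f) (i j : Fin n) (x : ℝ^n) :
    pd n j (pd n i f) x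
      = fderiv ℝ (fderiv ℝ f) x (EuclideanSpace.single j 1) (EuclideanSpace.single i 1) := by
  have hdf : DifferentiableAt ℝ (fderiv ℝ f) x :=
    (hf.fderiv_right (m := 1) le_rfl).differentiable one_ne_zero x
  change fderiv ℝ (fun y => fderiv ℝ f y (EuclideanSpace.single i 1)) x _ = _
  simp [fderiv_clm_apply hdf (differentiableAt_const _)]

lemma pd_comm (hf : ContDiff ℝ 2 f) (i j : Fin n) (x : ℝ^n) :
    pd n j (pd n i f) x = pd n i (pd n j f) x := by
  rw [pd_pd_eq_fderiv_fderiv hf, pd_pd_eq_fderiv_fderiv hf,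
    hf.contDiffAt.isSymmSndFDerivAt (by simp)]

lemma sum_coord_mul_pd_of_homogeneous {d : ℕ} (hf : DifferentiableAt ℝ f x)
    (hhom : ∀ t : ℝ, f (t • x) = t ^ d * f x) :
    ∑ k, x k * pd n k f x = d * f x := by
  have hline : HasDerivAt (fun t : ℝ => f (t • x)) (fderiv ℝ f x x) 1 := by
    have := hf.hasFDerivAt.comp_hasDerivAt_of_eq (x := (1 : ℝ))
      ((hasDerivAt_id 1).smul_const x) (one_smul ℝ x).symm
    simpa [Function.comp_def] using this
  have hpow : HasDerivAt (fun t : ℝ => t ^ d * f x) (d * f x) 1 := by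
    simpa using (hasDerivAt_pow d 1).mul_const (f x)
  rw [funext hhom] at hline
  have hx := (EuclideanSpace.basisFun (Fin n) ℝ).sum_repr x
  calc ∑ k, x k * pd n k f x = fderiv ℝ f x (∑ k, x k • EuclideanSpace.single k 1) := by
        simp [pd, map_sum]
    _ = d * f x := by
        rw [← hline.unique hpow]
        simpa using congrArg (fderiv ℝ f x) hx

lemma pd_pd_sub (hf : ContDiff ℝ 2 f) (hg : ContDiff ℝ 2 g) (i j : Fin n) (x : ℝ^n) :
    pd n j (pd n i (fun y => f y - g y)) x = pd n j (pd n i f) x - pd n j (pd n i g) x := by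
  have hfirst : pd n i (fun y => f y - g y) = fun y => pd n i f y - pd n i g y :=
    funext fun y => pd_sub (hf.differentiable two_ne_zero y) (hg.differentiable two_ne_zero y) i
  rw [hfirst, pd_sub (differentiable_pd hf i x) (differentiable_pd hg i x)]

lemma pd_pd_const_mul (hf : ContDiff ℝ 2 f) (c : ℝ) (i j : Fin n) (x : ℝ^n) :
    pd n j (pd n i (fun y => c * f y)) x = c * pd n j (pd n i f) x := by
  have hfirst : pd n i (fun y => c * f y) = fun y => c * pd n i f y :=
    funext fun y => pd_const_mul (hf.differentiable two_ne_zero y) c i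
  rw [hfirst, pd_const_mul (differentiable_pd hf i x)]

lemma pd_pd_mul (hf : ContDiff ℝ 2 f) (hg : ContDiff ℝ 2 g) (i j : Fin n) (x : ℝ^n) :
    pd n j (pd n i (fun y => f y * g y)) x
      = pd n j (pd n i f) x * g x + pd n i f x * pd n j g x + pd n j f x * pd n i g x
        + f x * pd n j (pd n i g) x := by
  have hdf := hf.differentiable two_ne_zero
  have hdg := hg.differentiable two_ne_zero
  have hdfi := differentiable_pd hf i x
  have hdgi := differentiable_pd hg i x
  have hfirst : pd n i (fun y => f y * g y) = fun y => pd n i f y * g y + f y * pd n i g y :=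
    funext fun y => pd_mul (hdf y) (hdg y) i
  rw [hfirst, pd_add (hdfi.fun_mul (hdg x)) ((hdf x).fun_mul hdgi), pd_mul hdfi (hdg x),
    pd_mul (hdf x) hdgi]
  ring

lemma pd_norm_sq_pow (m : ℕ) (i : Fin n) (x : ℝ^n) :
    pd n i (fun y : ℝ^n => (‖y‖ ^ 2) ^ m) x = 2 * m * (‖x‖ ^ 2) ^ (m - 1) * x i := by
  rw [pd_pow ((contDiff_norm_sq ℝ).differentiable two_ne_zero x), pd_norm_sq]
  ring

lemma pd_pd_norm_sq_pow (m : ℕ) (i j : Fin n) (x : ℝ^n) :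
    pd n j (pd n i (fun y : ℝ^n => (‖y‖ ^ 2) ^ m)) x
      = 2 * m * (‖x‖ ^ 2) ^ (m - 1) * (if i = j then 1 else 0)
        + 4 * m * (m - 1 : ℕ) * (‖x‖ ^ 2) ^ (m - 2) * x i * x j := by
  have hS := (contDiff_norm_sq ℝ (E := ℝ^n)).differentiable two_ne_zero
  rw [funext (pd_norm_sq_pow m i),
    pd_mul (f := fun y => 2 * m * (‖y‖ ^ 2) ^ (m - 1)) (((hS x).fun_pow _).const_mul _)
      ((contDiff_coord i).differentiable one_ne_zero x),
    pd_const_mul ((hS x).fun_pow _), pd_pow (hS x), pd_norm_sq, pd_coord,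
    show m - 1 - 1 = m - 2 by omega]
  ring

end PartialDerivatives

section Ddiv

variable {ψ φ : Fin n → Fin n → ℝ^n → ℝ} {x : ℝ^n}

noncomputable def ddiv (ψ : Fin n → Fin n → ℝ^n → ℝ) (x : ℝ^n) : ℝ :=
  ∑ i, ∑ j, pd n j (pd n i (ψ i j)) x

lemma ddiv_sub (hφ : ∀ i j, ContDiff ℝ 2 (φ i j)) (hψ : ∀ i j, ContDiff ℝ 2 (ψ i j)) :
    ddiv (fun i j y => φ i j y - ψ i j y) x = ddiv φ x - ddiv ψ x := by
  simp only [ddiv, pd_pd_sub (hφ _ _) (hψ _ _), sum_sub_distrib]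

lemma ddiv_const_mul (hψ : ∀ i j, ContDiff ℝ 2 (ψ i j)) (c : ℝ) :
    ddiv (fun i j y => c * ψ i j y) x = c * ddiv ψ x := by
  simp only [ddiv, pd_pd_const_mul (hψ _ _), mul_sum]

lemma ddiv_mul_left {f : ℝ^n → ℝ} (hf : ContDiff ℝ 2 f) (hψ : ∀ i j, ContDiff ℝ 2 (ψ i j)) :
    ddiv (fun i j y => f y * ψ i j y) x
      = ∑ i, ∑ j, pd n j (pd n i f) x * ψ i j x + ∑ i, pd n i f x * ∑ j, pd n j (ψ i j) x
        + ∑ j, pd n j f x * ∑ i, pd n i (ψ i j) x + f x * ddiv ψ x := by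
  simp only [ddiv, pd_pd_mul hf (hψ _ _), sum_add_distrib, mul_sum]
  rw [sum_comm (f := fun i j => pd n j f x * pd n i (ψ i j) x)]

theorem ddiv_norm_sq_pow_mul_eq_zero (hψ : ∀ i j, ContDiff ℝ 2 (ψ i j))
    (hsymm : ∀ i j, ψ i j = ψ j i) (htrace : ∑ i, ψ i i x = 0)
    (hrad : ∑ i, ∑ j, x i * x j * ψ i j x = 0)
    (hdivrad : ∑ j, x j * ∑ i, pd n i (ψ i j) x = 0) (hddiv : ddiv ψ x = 0) (m : ℕ) :
    ddiv (fun i j y => (‖y‖ ^ 2) ^ m * ψ i j y) x = 0 := by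
  have hhess : ∑ i, ∑ j, pd n j (pd n i (fun y : ℝ^n => (‖y‖ ^ 2) ^ m)) x * ψ i j x
      = 2 * m * (‖x‖ ^ 2) ^ (m - 1) * ∑ i, ψ i i x
        + 4 * m * (m - 1 : ℕ) * (‖x‖ ^ 2) ^ (m - 2) * ∑ i, ∑ j, x i * x j * ψ i j x := by
    simp only [pd_pd_norm_sq_pow, add_mul, sum_add_distrib, mul_sum, mul_ite, mul_one, mul_zero,
      ite_mul, zero_mul, sum_ite_eq, mem_univ, if_true, mul_assoc]
  have hdivrad' : ∑ i, x i * ∑ j, pd n j (ψ i j) x = 0 := by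
    simpa only [hsymm] using hdivrad
  rw [ddiv_mul_left ((contDiff_norm_sq ℝ).pow m) hψ, hhess, htrace, hrad, hddiv]
  simp only [pd_norm_sq_pow, mul_assoc, ← mul_sum, hdivrad', hdivrad]
  ring

lemma ddiv_eq_sum_pd_of_sum_pd_eq {u : Fin n → ℝ^n → ℝ} (hψ : ∀ i j, ContDiff ℝ 2 (ψ i j))
    (hu : ∀ j y, ∑ i, pd n i (ψ i j) y = u j y) (x : ℝ^n) :
    ddiv ψ x = ∑ j, pd n j (u j) x := by
  rw [ddiv, sum_comm]
  refine sum_congr rfl fun j _ => ?_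
  rw [← pd_sum fun i _ => differentiable_pd (hψ i j) i x, funext (hu j)]

theorem ddiv_norm_sq_pow_mul_eq_zero_of_sum_pd_eq {V : Fin n → ℝ^n → ℝ} {κ : ℝ}
    (hψ : ∀ i j, ContDiff ℝ 2 (ψ i j)) (hsymm : ∀ i j, ψ i j = ψ j i)
    (hV : ∀ j, DifferentiableAt ℝ (V j) x) (hdivψ : ∀ j y, ∑ i, pd n i (ψ i j) y = κ * V j y)
    (htrace : ∑ i, ψ i i x = 0) (hrad : ∑ i, ∑ j, x i * x j * ψ i j x = 0)
    (hdivV : ∑ j, pd n j (V j) x = 0) (hradV : ∑ j, x j * V j x = 0) (m : ℕ) :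
    ddiv (fun i j y => (‖y‖ ^ 2) ^ m * ψ i j y) x = 0 := by
  refine ddiv_norm_sq_pow_mul_eq_zero hψ hsymm htrace hrad ?_ ?_ m
  · simp only [hdivψ, mul_left_comm _ κ, ← mul_sum, hradV, mul_zero]
  · rw [ddiv_eq_sum_pd_of_sum_pd_eq hψ hdivψ]
    simp only [pd_const_mul (hV _), ← mul_sum, hdivV, mul_zero]

end Ddiv

section Tensors

variable {V : Fin n → ℝ^n → ℝ} {x : ℝ^n}

noncomputable def symmGrad (V : Fin n → ℝ^n → ℝ) (i j : Fin n) (y : ℝ^n) : ℝ :=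
  pd n i (V j) y + pd n j (V i) y

def symmOuter (V : Fin n → ℝ^n → ℝ) (i j : Fin n) (y : ℝ^n) : ℝ :=
  y j * V i y + y i * V j y

lemma contDiff_symmGrad {k : WithTop ℕ∞} (hV : ∀ i, ContDiff ℝ (k + 1) (V i)) (i j : Fin n) :
    ContDiff ℝ k (symmGrad V i j) :=
  (contDiff_pd (hV j) i).add (contDiff_pd (hV i) j)

lemma contDiff_symmOuter {k : WithTop ℕ∞} (hV : ∀ i, ContDiff ℝ k (V i)) (i j : Fin n) :
    ContDiff ℝ k (symmOuter V i j) :=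
  ((contDiff_coord j).mul (hV i)).add ((contDiff_coord i).mul (hV j))

lemma symmGrad_comm (i j : Fin n) : symmGrad V i j = symmGrad V j i :=
  funext fun _ => add_comm _ _

lemma symmOuter_comm (i j : Fin n) : symmOuter V i j = symmOuter V j i :=
  funext fun _ => add_comm _ _

lemma sum_symmGrad_diag : ∑ i, symmGrad V i i x = 2 * ∑ i, pd n i (V i) x := by
  simp only [symmGrad, ← two_mul, mul_sum]

lemma sum_symmOuter_diag : ∑ i, symmOuter V i i x = 2 * ∑ i, x i * V i x := by
  simp only [symmOuter, ← two_mul, mul_sum]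

lemma sum_sum_mul_symmGrad {d : ℕ} (hV : ∀ i, DifferentiableAt ℝ (V i) x)
    (hhom : ∀ i (t : ℝ), V i (t • x) = t ^ d * V i x) :
    ∑ i, ∑ j, x i * x j * symmGrad V i j x = 2 * d * ∑ i, x i * V i x := by
  have heuler : ∀ j, ∑ i, x i * pd n i (V j) x = d * V j x :=
    fun j => sum_coord_mul_pd_of_homogeneous (hV j) (hhom j)
  have hsplit : ∀ i j, x i * x j * symmGrad V i j x
      = x j * (x i * pd n i (V j) x) + x i * (x j * pd n j (V i) x) := by
    intro i j
    simp only [symmGrad]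
    ring
  calc ∑ i, ∑ j, x i * x j * symmGrad V i j x
      = ∑ j, x j * ∑ i, x i * pd n i (V j) x + ∑ i, x i * ∑ j, x j * pd n j (V i) x := by
        simp only [hsplit, sum_add_distrib, mul_sum]
        rw [sum_comm (f := fun i j => x j * (x i * pd n i (V j) x))]
    _ = 2 * d * ∑ i, x i * V i x := by
        simp only [heuler, mul_sum, ← sum_add_distrib]
        exact sum_congr rfl fun _ _ => by ring

lemma sum_sum_mul_symmOuter :
    ∑ i, ∑ j, x i * x j * symmOuter V i j x = 2 * (∑ k, x k ^ 2) * ∑ i, x i * V i x := by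
  have hsplit : ∀ i j, x i * x j * symmOuter V i j x
      = x i * V i x * x j ^ 2 + x i ^ 2 * (x j * V j x) := by
    intro i j
    simp only [symmOuter]
    ring
  simp only [hsplit, sum_add_distrib, ← mul_sum, ← sum_mul]
  ring

lemma sum_pd_symmGrad (hV : ∀ i, ContDiff ℝ 2 (V i)) (j : Fin n) (x : ℝ^n) :
    ∑ i, pd n i (symmGrad V i j) x
      = lap n (V j) x + pd n j (fun z => ∑ i, pd n i (V i) z) x := by
  have hterm : ∀ i, pd n i (symmGrad V i j) x
      = pd n i (pd n i (V j)) x + pd n j (pd n i (V i)) x := by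
    intro i
    change pd n i (fun z => pd n i (V j) z + pd n j (V i) z) x = _
    rw [pd_add (differentiable_pd (hV j) i x) (differentiable_pd (hV i) j x),
      pd_comm (hV i) j i]
  rw [sum_congr rfl fun i _ => hterm i, sum_add_distrib, lap,
    pd_sum fun i _ => differentiable_pd (hV i) i x]

lemma sum_pd_symmOuter {d : ℕ} (hV : ∀ i, DifferentiableAt ℝ (V i) x)
    (hhom : ∀ i (t : ℝ), V i (t • x) = t ^ d * V i x) (j : Fin n) :
    ∑ i, pd n i (symmOuter V i j) x = (n + d + 1) * V j x + x j * ∑ i, pd n i (V i) x := by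
  have hcoord : ∀ k : Fin n, DifferentiableAt ℝ (fun y : ℝ^n => y k) x :=
    fun k => (contDiff_coord k).differentiable one_ne_zero x
  have hterm : ∀ i, pd n i (symmOuter V i j) x
      = (if j = i then V i x else 0) + x j * pd n i (V i) x
        + (V j x + x i * pd n i (V j) x) := by
    intro i
    change pd n i (fun y => y j * V i y + y i * V j y) x = _
    rw [pd_add ((hcoord j).fun_mul (hV i)) ((hcoord i).fun_mul (hV j)),
      pd_mul (hcoord j) (hV i), pd_mul (hcoord i) (hV j), pd_coord, pd_coord]
    simp
  simp only [hterm, sum_add_distrib, sum_ite_eq, mem_univ, if_true, ← mul_sum, sum_const,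
    card_univ, Fintype.card_fin, nsmul_eq_mul, sum_coord_mul_pd_of_homogeneous (hV j) (hhom j)]
  ring

theorem ddiv_norm_sq_pow_mul_symmGrad_eq_zero {d : ℕ} (hV : ∀ i, ContDiff ℝ 3 (V i))
    (hhom : ∀ i (t : ℝ), V i (t • x) = t ^ d * V i x) (hharm : ∀ i y, lap n (V i) y = 0)
    (hdiv : ∀ y, ∑ i, pd n i (V i) y = 0) (hrad : ∑ i, x i * V i x = 0) (m : ℕ) :
    ddiv (fun i j y => (‖y‖ ^ 2) ^ m * symmGrad V i j y) x = 0 := by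
  have hV2 : ∀ i, ContDiff ℝ 2 (V i) := fun i => (hV i).of_le (by norm_num)
  have hdV : ∀ i, DifferentiableAt ℝ (V i) x := fun i => (hV2 i).differentiable two_ne_zero x
  refine ddiv_norm_sq_pow_mul_eq_zero_of_sum_pd_eq (κ := 0) (contDiff_symmGrad hV) symmGrad_comm
    hdV ?_ ?_ ?_ (hdiv x) hrad m
  · intro j y
    rw [sum_pd_symmGrad hV2, hharm, funext hdiv]
    simp [pd]
  · rw [sum_symmGrad_diag, hdiv x, mul_zero]
  · rw [sum_sum_mul_symmGrad hdV hhom, hrad, mul_zero]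

theorem ddiv_norm_sq_pow_mul_symmOuter_eq_zero {d : ℕ} (hV : ∀ i, ContDiff ℝ 2 (V i))
    (hhom : ∀ i (t : ℝ) y, V i (t • y) = t ^ d * V i y) (hdiv : ∀ y, ∑ i, pd n i (V i) y = 0)
    (hrad : ∑ i, x i * V i x = 0) (m : ℕ) :
    ddiv (fun i j y => (‖y‖ ^ 2) ^ m * symmOuter V i j y) x = 0 := by
  have hdV : ∀ i, Differentiable ℝ (V i) := fun i => (hV i).differentiable two_ne_zero
  refine ddiv_norm_sq_pow_mul_eq_zero_of_sum_pd_eq (κ := n + d + 1) (contDiff_symmOuter hV)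
    symmOuter_comm (fun i => hdV i x) ?_ ?_ ?_ (hdiv x) hrad m
  · intro j y
    rw [sum_pd_symmOuter (fun i => hdV i y) (fun i t => hhom i t y), hdiv, mul_zero, add_zero]
  · rw [sum_symmOuter_diag, hrad, mul_zero]
  · rw [sum_sum_mul_symmOuter, hrad, mul_zero]

end Tensors

end DoubleDivergence

open DoubleDivergence

theorem double_divergence_W_vanishes_general (n s q : ℕ)
    (V : Fin n → EuclideanSpace ℝ (Fin n) → ℝ)
    (hsmooth : ∀ i, ContDiff ℝ (⊤ : ℕ∞) (V i))
    (hhom : ∀ i, ∀ (t : ℝ) (x : EuclideanSpace ℝ (Fin n)), V i (t • x) = t ^ (s + 1) * V i x)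
    (hharm : ∀ i x, lap n (V i) x = 0)
    (hdiv : ∀ x, ∑ i, pd n i (V i) x = 0)
    (hrad : ∀ x, ∑ i, x i * V i x = 0)
    (W : EuclideanSpace ℝ (Fin n) → Fin n → Fin n → ℝ)
    (hW : ∀ x, ∀ i j, W x i j
      = ‖x‖ ^ (2 * q) * (pd n i (V j) x + pd n j (V i) x)
        - (s : ℝ) * ‖x‖ ^ (2 * q - 2) * (x j * V i x + x i * V j x)) :
    ∀ x, ∑ i, ∑ j, pd n j (pd n i (fun y => W y i j)) x = 0 := by
  intro x
  have hV : ∀ i, ContDiff ℝ 3 (V i) := fun i => (hsmooth i).of_le (WithTop.coe_le_coe.mpr le_top)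
  have hV2 : ∀ i, ContDiff ℝ 2 (V i) := fun i => (hV i).of_le (by norm_num)
  have hWsplit : (fun i j y => W y i j) = fun i j y =>
      (‖y‖ ^ 2) ^ q * symmGrad V i j y - s * ((‖y‖ ^ 2) ^ (q - 1) * symmOuter V i j y) := by
    funext i j y
    rw [hW, ← pow_mul, ← pow_mul, show 2 * (q - 1) = 2 * q - 2 by omega, symmGrad, symmOuter]
    ring
  have hA : ∀ i j, ContDiff ℝ 2 (fun y => (‖y‖ ^ 2) ^ q * symmGrad V i j y) :=
    fun i j => ((contDiff_norm_sq ℝ).pow q).mul (contDiff_symmGrad hV i j)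
  have hB : ∀ i j, ContDiff ℝ 2 (fun y => (‖y‖ ^ 2) ^ (q - 1) * symmOuter V i j y) :=
    fun i j => ((contDiff_norm_sq ℝ).pow (q - 1)).mul (contDiff_symmOuter hV2 i j)
  change ddiv (fun i j y => W y i j) x = 0
  rw [hWsplit, ddiv_sub hA fun i j => contDiff_const.mul (hB i j), ddiv_const_mul hB,
    ddiv_norm_sq_pow_mul_symmGrad_eq_zero hV (hhom · · x) hharm hdiv (hrad x),
    ddiv_norm_sq_pow_mul_symmOuter_eq_zero hV2 hhom hdiv (hrad x), mul_zero, sub_zero]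

/-- Let `V = (V₁,…,Vₙ)` be a vector field on `ℝⁿ` whose components are homogeneous
harmonic polynomials of degree `s+1`, with `div V = 0` and `xᵢVᵢ = 0`. Define
`Ŵᵢⱼ = |x|^{2q}(∂ᵢVⱼ + ∂ⱼVᵢ) − s|x|^{2q−2}(xⱼVᵢ + xᵢVⱼ)` for `q ≥ 1`. Then the
double divergence vanishes: `Ŵᵢⱼ,ᵢⱼ = 0`. -/
theorem double_divergence_W_vanishes (n s q : ℕ) (hn : 2 ≤ n) (hs : 1 ≤ s) (hq : 1 ≤ q)
    (V : Fin n → EuclideanSpace ℝ (Fin n) → ℝ)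
    (hsmooth : ∀ i, ContDiff ℝ (⊤ : ℕ∞) (V i))
    (hhom : ∀ i, ∀ (t : ℝ) (x : EuclideanSpace ℝ (Fin n)), V i (t • x) = t ^ (s + 1) * V i x)
    (hharm : ∀ i x, lap n (V i) x = 0)
    (hdiv : ∀ x, ∑ i, pd n i (V i) x = 0)
    (hrad : ∀ x, ∑ i, x i * V i x = 0)
    (W : EuclideanSpace ℝ (Fin n) → Fin n → Fin n → ℝ)
    (hW : ∀ x, ∀ i j, W x i j
      = ‖x‖ ^ (2 * q) * (pd n i (V j) x + pd n j (V i) x)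
        - (s : ℝ) * ‖x‖ ^ (2 * q - 2) * (x j * V i x + x i * V j x)) :
    ∀ x, ∑ i, ∑ j, pd n j (pd n i (fun y => W y i j)) x = 0 :=
  double_divergence_W_vanishes_general n s q V hsmooth hhom hharm hdiv hrad W hW
end
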